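/- The transformation (x,y,z,w) ↦ (x₄,y₄,z₄,w₄) given by x₄ = -((x-2y-2w+2t)y + (z-2y-2w+2s)w - α₄)y, y₄ = 1/y, z₄ = (z-2y-2w+2s)y, w₄ = w/y is symplectic: dx∧dy + dz∧dw = dx₄∧dy₄ + dz₄∧dw₄ on the set y ≠ 0 (with t,s held constant). -/

import Mathlib

/-!
Writing `a = x - 2y - 2w + 2t` and `b = z - 2y - 2w + 2s`, the map is
`(a, y, b, w) ↦ (-(a y + b w - α₄) y, 1 / y, b y, w / y)`. For arbitrary functions `a, y, b, w`
this substitution pulls `dx₄ ∧ dy₄ + dz₄ ∧ dw₄` back to `da ∧ dy + db ∧ dw` (the cross terms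
`(w / y) db ∧ dy` and `(b / y) dw ∧ dy` cancel between the two summands), and the shear
`(x, z) ↦ (a, b)` preserves the symplectic form since its extra terms `-2 dw ∧ dy` and
`-2 dy ∧ dw` cancel.
-/

noncomputable def Dv (f : ℂ × ℂ × ℂ × ℂ → ℂ) (p v : ℂ × ℂ × ℂ × ℂ) : ℂ :=
  fderiv ℂ f p v

def omega (u v : ℂ × ℂ × ℂ × ℂ) : ℂ :=
  (u.1 * v.2.1 - v.1 * u.2.1) + (u.2.2.1 * v.2.2.2 - v.2.2.1 * u.2.2.2)

noncomputable def pullback (X Y Z W : ℂ × ℂ × ℂ × ℂ → ℂ) (p u v : ℂ × ℂ × ℂ × ℂ) : ℂ :=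
  (Dv X p u * Dv Y p v - Dv X p v * Dv Y p u)
    + (Dv Z p u * Dv W p v - Dv Z p v * Dv W p u)

section Dv

variable {f g : ℂ × ℂ × ℂ × ℂ → ℂ} {p : ℂ × ℂ × ℂ × ℂ} (v : ℂ × ℂ × ℂ × ℂ)

theorem Dv_mul (hf : DifferentiableAt ℂ f p) (hg : DifferentiableAt ℂ g p) :
    Dv (fun q => f q * g q) p v = Dv f p v * g p + f p * Dv g p v := by
  simp [Dv, fderiv_fun_mul hf hg]
  ring

theorem Dv_add (hf : DifferentiableAt ℂ f p) (hg : DifferentiableAt ℂ g p) :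
    Dv (fun q => f q + g q) p v = Dv f p v + Dv g p v := by
  simp [Dv, fderiv_fun_add hf hg]

theorem Dv_sub_const (c : ℂ) : Dv (fun q => f q - c) p v = Dv f p v := by
  simp [Dv, fderiv_sub_const]

theorem Dv_neg : Dv (fun q => -f q) p v = -Dv f p v := by
  simp [Dv, fderiv_fun_neg]

theorem Dv_inv (hf : DifferentiableAt ℂ f p) (h0 : f p ≠ 0) :
    Dv (fun q => (f q)⁻¹) p v = -Dv f p v / f p ^ 2 := by
  have h : HasFDerivAt (fun q => (f q)⁻¹) _ p := (hasFDerivAt_inv h0).comp p hf.hasFDerivAt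
  simp [Dv, h.fderiv]
  ring

theorem Dv_one_div (hf : DifferentiableAt ℂ f p) (h0 : f p ≠ 0) :
    Dv (fun q => 1 / f q) p v = -Dv f p v / f p ^ 2 := by
  simp only [one_div, Dv_inv v hf h0]

theorem Dv_div (hf : DifferentiableAt ℂ f p) (hg : DifferentiableAt ℂ g p) (h0 : g p ≠ 0) :
    Dv (fun q => f q / g q) p v = Dv f p v / g p - f p * Dv g p v / g p ^ 2 := by
  simp only [div_eq_mul_inv]
  rw [Dv_mul (g := fun q => (g q)⁻¹) v hf (hg.inv h0), Dv_inv v hg h0]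
  ring

end Dv

theorem pullback_inversion (α : ℂ) {a y b w : ℂ × ℂ × ℂ × ℂ → ℂ} {p : ℂ × ℂ × ℂ × ℂ}
    (ha : DifferentiableAt ℂ a p) (hy : DifferentiableAt ℂ y p) (hb : DifferentiableAt ℂ b p)
    (hw : DifferentiableAt ℂ w p) (hy0 : y p ≠ 0) (u v : ℂ × ℂ × ℂ × ℂ) :
    pullback (fun q => -(a q * y q + b q * w q - α) * y q) (fun q => 1 / y q)
      (fun q => b q * y q) (fun q => w q / y q) p u v = pullback a y b w p u v := by
  have hDx : ∀ v, Dv (fun q => -(a q * y q + b q * w q - α) * y q) p v =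
      -(Dv a p v * y p + a p * Dv y p v + (Dv b p v * w p + b p * Dv w p v)) * y p
        - (a p * y p + b p * w p - α) * Dv y p v := by
    intro v
    rw [Dv_mul v (by fun_prop) hy, Dv_neg, Dv_sub_const, Dv_add v (by fun_prop) (by fun_prop),
      Dv_mul v ha hy, Dv_mul v hb hw]
    ring
  simp only [pullback, hDx, Dv_one_div _ hy hy0, Dv_mul _ hb hy, Dv_div _ hw hy hy0]
  field_simp
  ring

theorem pullback_shear (k c d : ℂ) (p u v : ℂ × ℂ × ℂ × ℂ) :
    pullback (fun q => q.1 - k * q.2.1 - k * q.2.2.2 + c) (fun q => q.2.1)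
      (fun q => q.2.2.1 - k * q.2.1 - k * q.2.2.2 + d) (fun q => q.2.2.2) p u v = omega u v := by
  simp (disch := fun_prop) only [pullback, Dv, omega, fderiv_add_const, fderiv_fun_sub,
    fderiv_const_mul, fderiv.fst, fderiv.snd, fderiv_fun_id, ContinuousLinearMap.comp_id,
    sub_apply, smul_apply, ContinuousLinearMap.comp_apply,
    ContinuousLinearMap.coe_fst', ContinuousLinearMap.coe_snd', smul_eq_mul]
  ring

/-- The transformation (x,y,z,w) ↦ (x₄,y₄,z₄,w₄) of the P_IV-type system
is symplectic for y ≠ 0 (t, s held constant). -/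
theorem coord4_symplectic (α₄ t s : ℂ) (p : ℂ × ℂ × ℂ × ℂ) (hy : p.2.1 ≠ 0) :
    ∀ u v : ℂ × ℂ × ℂ × ℂ,
      pullback
        (fun q => -((q.1 - 2 * q.2.1 - 2 * q.2.2.2 + 2 * t) * q.2.1
          + (q.2.2.1 - 2 * q.2.1 - 2 * q.2.2.2 + 2 * s) * q.2.2.2 - α₄) * q.2.1)
        (fun q => 1 / q.2.1)
        (fun q => (q.2.2.1 - 2 * q.2.1 - 2 * q.2.2.2 + 2 * s) * q.2.1)
        (fun q => q.2.2.2 / q.2.1) p u v = omega u v := by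
  intro u v
  exact (pullback_inversion α₄ (by fun_prop) (by fun_prop) (by fun_prop) (by fun_prop) hy u v).trans
    (pullback_shear 2 (2 * t) (2 * s) p u v)
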